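/- Almost surely, |E[e | x]| ≤ ‖(I_d − P_{M̃})θ̃‖ · ‖E[z̃ | x] − P_{M̃} z̃‖, where ‖·‖ is the Euclidean norm and E[z̃ | x] denotes the componentwise conditional expectation of z̃ given the σ-algebra generated by x. Consequently, for every t > 0, P(|E[e|x]| > t) ≤ P(‖E[z̃|x] − P_{M̃} z̃‖ > t/‖(I_d − P_{M̃})θ̃‖) whenever (I_d − P_{M̃})θ̃ ≠ 0. -/

import Mathlib

/-!
In the whitened coordinates `z̃` the working-model error is `e = c + u'z̃ + ε` with
`u = θ̃ - M̃β`. The normal equations of the least-squares problem, evaluated with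
`E[z̃] = 0`, `E[z̃z̃'] = I` and the independence of `ε` and `z`, force `c = 0` and `M̃'u = 0`;
hence `(I - P)θ̃ = u` and `u'P = 0`. As `ε` is centred and independent of `x`,
`E[e | x] = u'E[z̃ | x] = u'(E[z̃ | x] - Pz̃)`, and Cauchy–Schwarz gives the bound, from which
the tail inequality follows pointwise.
-/

open MeasureTheory Matrix ProbabilityTheory

namespace Matrix

variable {m n : Type*} [Fintype n]

theorem abs_dotProduct_le_sqrt_mul_sqrt (u w : n → ℝ) :
    |u ⬝ᵥ w| ≤ √(u ⬝ᵥ u) * √(w ⬝ᵥ w) := by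
  have hu : 0 ≤ u ⬝ᵥ u := Finset.sum_nonneg fun i _ => mul_self_nonneg (u i)
  rw [← Real.sqrt_mul hu, ← Real.sqrt_sq_eq_abs]
  refine Real.sqrt_le_sqrt ?_
  simpa only [dotProduct, sq] using Finset.sum_mul_sq_le_sq_mul_sq Finset.univ u w

theorem mulVec_injective_of_rank_eq [DecidableEq n] {A : Matrix m n ℝ}
    (hA : A.rank = Fintype.card n) : Function.Injective A.mulVec := by
  have h := LinearMap.finrank_range_add_finrank_ker A.mulVecLin
  have hrange : Module.finrank ℝ (LinearMap.range A.mulVecLin) = Fintype.card n := hA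
  rw [Module.finrank_fintype_fun_eq_card, hrange] at h
  have hker : LinearMap.ker A.mulVecLin = ⊥ := Submodule.finrank_eq_zero.mp (by omega)
  exact LinearMap.ker_eq_bot.mp hker

variable [Fintype m] [DecidableEq n]

theorem proj_mul_self {V : Matrix m n ℝ} (hV : Function.Injective V.mulVec) :
    V * (Vᵀ * V)⁻¹ * Vᵀ * V = V := by
  have hdet : IsUnit (Vᵀ * V).det := (PosDef.conjTranspose_mul_self V hV).det_pos.ne'.isUnit
  rw [Matrix.mul_assoc _ Vᵀ, Matrix.mul_assoc, nonsing_inv_mul _ hdet, Matrix.mul_one]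

theorem dotProduct_proj_mulVec_eq_zero {V : Matrix m n ℝ} {u : m → ℝ} (hu : Vᵀ *ᵥ u = 0)
    (w : m → ℝ) : u ⬝ᵥ (V * (Vᵀ * V)⁻¹ * Vᵀ) *ᵥ w = 0 := by
  rw [dotProduct_mulVec, ← vecMul_vecMul, ← vecMul_vecMul, ← mulVec_transpose V u, hu,
    zero_vecMul, zero_vecMul, zero_dotProduct]

theorem one_sub_proj_mulVec [DecidableEq m] {V : Matrix m n ℝ} (hV : Function.Injective V.mulVec)
    {u : m → ℝ} (hu : Vᵀ *ᵥ u = 0) (b : n → ℝ) :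
    (1 - V * (Vᵀ * V)⁻¹ * Vᵀ) *ᵥ (u + V *ᵥ b) = u := by
  rw [sub_mulVec, one_mulVec, mulVec_add, mulVec_mulVec, proj_mul_self hV,
    ← mulVec_mulVec, hu, mulVec_zero]
  abel

end Matrix

section DotProduct

variable {Ω ι : Type*} [MeasurableSpace Ω] {μ : Measure Ω} [Fintype ι]

theorem MeasureTheory.MemLp.dotProduct {p : ENNReal} {f : Ω → ι → ℝ}
    (hf : ∀ i, MemLp (fun ω => f ω i) p μ) (u : ι → ℝ) :
    MemLp (fun ω => u ⬝ᵥ f ω) p μ :=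
  memLp_finsetSum _ fun i _ => (hf i).const_mul (u i)

theorem MeasureTheory.Integrable.dotProduct {f : Ω → ι → ℝ}
    (hf : ∀ i, Integrable (fun ω => f ω i) μ) (u : ι → ℝ) :
    Integrable (fun ω => u ⬝ᵥ f ω) μ :=
  integrable_finsetSum _ fun i _ => (hf i).const_mul (u i)

theorem integral_dotProduct {f : Ω → ι → ℝ} (hf : ∀ i, Integrable (fun ω => f ω i) μ)
    (u : ι → ℝ) : ∫ ω, u ⬝ᵥ f ω ∂μ = u ⬝ᵥ fun i => ∫ ω, f ω i ∂μ := by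
  simp only [dotProduct]
  rw [integral_finsetSum _ fun i _ => (hf i).const_mul (u i)]
  simp only [integral_const_mul]

theorem integral_dotProduct_mul_dotProduct {f : Ω → ι → ℝ}
    (hf : ∀ i, MemLp (fun ω => f ω i) 2 μ) (u v : ι → ℝ) :
    ∫ ω, (u ⬝ᵥ f ω) * (v ⬝ᵥ f ω) ∂μ
      = u ⬝ᵥ Matrix.of (fun i j => ∫ ω, f ω i * f ω j ∂μ) *ᵥ v := by
  have hprod : ∀ i j, Integrable (fun ω => f ω i * f ω j) μ :=
    fun i j => (hf i).integrable_mul (hf j)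
  have hexp : (fun ω => (u ⬝ᵥ f ω) * (v ⬝ᵥ f ω))
      = fun ω => ∑ i, u i * ∑ j, f ω i * f ω j * v j := by
    funext ω
    rw [dotProduct, dotProduct, Finset.sum_mul_sum]
    refine Finset.sum_congr rfl fun i _ => ?_
    rw [Finset.mul_sum]
    exact Finset.sum_congr rfl fun j _ => by ring
  rw [hexp, integral_finsetSum _ fun i _ =>
    (integrable_finsetSum _ fun j _ => (hprod i j).mul_const (v j)).const_mul (u i)]
  simp only [integral_const_mul]
  refine Finset.sum_congr rfl fun i _ => ?_
  rw [integral_finsetSum _ fun j _ => (hprod i j).mul_const (v j)]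
  simp only [integral_mul_const, mulVec, dotProduct, of_apply]

end DotProduct

section LeastSquares

variable {Ω ι : Type*} [MeasurableSpace Ω] {μ : Measure Ω} [Fintype ι]

theorem integral_mul_eq_zero_of_forall_integral_sq_le {e g : Ω → ℝ} (he : MemLp e 2 μ)
    (hg : MemLp g 2 μ) (h : ∀ t : ℝ, ∫ ω, e ω ^ 2 ∂μ ≤ ∫ ω, (e ω - t * g ω) ^ 2 ∂μ) :
    ∫ ω, e ω * g ω ∂μ = 0 := by
  have heg : Integrable (fun ω => e ω * g ω) μ := he.integrable_mul hg
  have hexpand (t : ℝ) : ∫ ω, (e ω - t * g ω) ^ 2 ∂μ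
      = ∫ ω, e ω ^ 2 ∂μ + (∫ ω, g ω ^ 2 ∂μ) * (t * t) + (-2 * ∫ ω, e ω * g ω ∂μ) * t := by
    have hsq : Integrable (fun ω => e ω ^ 2 + t * t * g ω ^ 2) μ :=
      he.integrable_sq.add (hg.integrable_sq.const_mul _)
    have hexp : (fun ω => (e ω - t * g ω) ^ 2)
        = fun ω => (e ω ^ 2 + t * t * g ω ^ 2) + -2 * t * (e ω * g ω) := by
      funext ω; ring
    rw [hexp, integral_add hsq (heg.const_mul _), integral_add he.integrable_sq
      (hg.integrable_sq.const_mul _), integral_const_mul, integral_const_mul]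
    ring
  have hdisc := discrim_le_zero (a := ∫ ω, g ω ^ 2 ∂μ) (b := -2 * ∫ ω, e ω * g ω ∂μ) (c := 0)
    fun t => by linarith [h t, hexpand t]
  rw [discrim] at hdisc
  nlinarith [sq_nonneg (∫ ω, e ω * g ω ∂μ)]

theorem integral_residual_mul_eq_zero [IsFiniteMeasure μ] {y : Ω → ℝ} {x : Ω → ι → ℝ}
    (hy : MemLp y 2 μ) (hx : ∀ i, MemLp (fun ω => x ω i) 2 μ) {α : ℝ} {β : ι → ℝ}
    (hmin : ∀ (a : ℝ) (b : ι → ℝ),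
      ∫ ω, (y ω - α - β ⬝ᵥ x ω) ^ 2 ∂μ ≤ ∫ ω, (y ω - a - b ⬝ᵥ x ω) ^ 2 ∂μ)
    (a : ℝ) (b : ι → ℝ) :
    ∫ ω, (y ω - α - β ⬝ᵥ x ω) * (a + b ⬝ᵥ x ω) ∂μ = 0 := by
  refine integral_mul_eq_zero_of_forall_integral_sq_le
    ((hy.sub (memLp_const α)).sub (MemLp.dotProduct hx β))
    ((memLp_const a).add (MemLp.dotProduct hx b)) fun t => ?_
  convert hmin (α + t * a) (β + t • b) using 3 with ω
  simp only [add_dotProduct, smul_dotProduct, smul_eq_mul]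
  ring

end LeastSquares

theorem ProbabilityTheory.IndepFun.of_eq_add_mulVec {Ω m n β : Type*} [MeasurableSpace Ω]
    {μ : Measure Ω} [Fintype m] [Fintype n] [DecidableEq n] [MeasurableSpace β]
    {z : Ω → m → ℝ} {w : Ω → n → ℝ} {ε : Ω → β} {c : m → ℝ} {A : Matrix m n ℝ}
    {L : Matrix n m ℝ} (hLA : L * A = 1) (hz : ∀ ω, z ω = c + A *ᵥ w ω) (h : IndepFun z ε μ) :
    IndepFun w ε μ := by
  have hw : w = (fun v => L *ᵥ (v - c)) ∘ z := funext fun ω => by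
    rw [Function.comp_apply, hz, add_sub_cancel_left, mulVec_mulVec, hLA, one_mulVec]
  rw [hw]
  exact h.comp (by fun_prop) measurable_id

section Whitened

variable {Ω ι κ : Type*} [MeasurableSpace Ω] {μ : Measure Ω} [IsProbabilityMeasure μ]
  [Fintype ι] {w : Ω → ι → ℝ} {ε : Ω → ℝ}

theorem integral_const_add_dotProduct_add (hw : ∀ i, Integrable (fun ω => w ω i) μ)
    (hw0 : ∀ i, ∫ ω, w ω i ∂μ = 0) (hε : Integrable ε μ) (hε0 : ∫ ω, ε ω ∂μ = 0)
    (c : ℝ) (u : ι → ℝ) : ∫ ω, c + u ⬝ᵥ w ω + ε ω ∂μ = c := by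
  have hcu : Integrable (fun ω => c + u ⬝ᵥ w ω) μ :=
    (integrable_const c).add (Integrable.dotProduct hw u)
  rw [integral_add hcu hε, integral_add (integrable_const c) (Integrable.dotProduct hw u),
    integral_dotProduct hw, integral_const, hε0]
  simp [hw0]

theorem integral_const_add_dotProduct_add_mul_dotProduct [DecidableEq ι]
    (hw : ∀ i, MemLp (fun ω => w ω i) 2 μ) (hw0 : ∀ i, ∫ ω, w ω i ∂μ = 0)
    (hcov : ∀ i j, ∫ ω, w ω i * w ω j ∂μ = (1 : Matrix ι ι ℝ) i j)
    (hε : MemLp ε 2 μ) (hε0 : ∫ ω, ε ω ∂μ = 0) (hind : IndepFun w ε μ) (c : ℝ) (u v : ι → ℝ) :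
    ∫ ω, (c + u ⬝ᵥ w ω + ε ω) * (v ⬝ᵥ w ω) ∂μ = u ⬝ᵥ v := by
  have hw1 : ∀ i, Integrable (fun ω => w ω i) μ := fun i => (hw i).integrable one_le_two
  have hvw : MemLp (fun ω => v ⬝ᵥ w ω) 2 μ := MemLp.dotProduct hw v
  have hεvw : ∫ ω, ε ω * (v ⬝ᵥ w ω) ∂μ = 0 := by
    have hind' : IndepFun ε (fun ω => v ⬝ᵥ w ω) μ :=
      hind.symm.comp measurable_id (by fun_prop : Measurable fun x : ι → ℝ => v ⬝ᵥ x)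
    rw [hind'.integral_fun_mul_eq_mul_integral hε.aestronglyMeasurable hvw.aestronglyMeasurable,
      hε0, zero_mul]
  have hexp : (fun ω => (c + u ⬝ᵥ w ω + ε ω) * (v ⬝ᵥ w ω))
      = fun ω => (c * (v ⬝ᵥ w ω) + (u ⬝ᵥ w ω) * (v ⬝ᵥ w ω)) + ε ω * (v ⬝ᵥ w ω) := by
    funext ω; ring
  have hcov' : Matrix.of (fun i j => ∫ ω, w ω i * w ω j ∂μ) = 1 := Matrix.ext hcov
  have hcv : Integrable (fun ω => c * (v ⬝ᵥ w ω)) μ := (Integrable.dotProduct hw1 v).const_mul c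
  have huv : Integrable (fun ω => (u ⬝ᵥ w ω) * (v ⬝ᵥ w ω)) μ :=
    (MemLp.dotProduct hw u).integrable_mul hvw
  have hcuv : Integrable (fun ω => c * (v ⬝ᵥ w ω) + (u ⬝ᵥ w ω) * (v ⬝ᵥ w ω)) μ := hcv.add huv
  have hεv : Integrable (fun ω => ε ω * (v ⬝ᵥ w ω)) μ := hε.integrable_mul hvw
  rw [hexp, integral_add hcuv hεv, integral_add hcv huv,
    integral_const_mul, integral_dotProduct hw1, integral_dotProduct_mul_dotProduct hw, hcov',
    hεvw, one_mulVec]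
  simp [hw0]

theorem const_eq_zero_and_transpose_mulVec_eq_zero_of_integral_mul_eq_zero
    [DecidableEq ι] [Fintype κ] {e : Ω → ℝ} {c : ℝ} {u : ι → ℝ} (he : ∀ ω, e ω = c + u ⬝ᵥ w ω + ε ω)
    (hw : ∀ i, MemLp (fun ω => w ω i) 2 μ) (hw0 : ∀ i, ∫ ω, w ω i ∂μ = 0)
    (hcov : ∀ i j, ∫ ω, w ω i * w ω j ∂μ = (1 : Matrix ι ι ℝ) i j)
    (hε : MemLp ε 2 μ) (hε0 : ∫ ω, ε ω ∂μ = 0) (hind : IndepFun w ε μ)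
    (V : Matrix ι κ ℝ) (he0 : ∫ ω, e ω ∂μ = 0)
    (heV : ∀ b, ∫ ω, e ω * ((V *ᵥ b) ⬝ᵥ w ω) ∂μ = 0) :
    c = 0 ∧ Vᵀ *ᵥ u = 0 := by
  simp only [he] at he0 heV
  refine ⟨?_, dotProduct_eq_zero_iff.mp fun b => ?_⟩
  · rwa [integral_const_add_dotProduct_add (fun i => (hw i).integrable one_le_two) hw0
      (hε.integrable one_le_two) hε0] at he0
  · rw [← heV b, integral_const_add_dotProduct_add_mul_dotProduct hw hw0 hcov hε hε0 hind,
      dotProduct_mulVec, mulVec_transpose]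

end Whitened

section CondExp

variable {Ω ι : Type*} {m0 : MeasurableSpace Ω} {μ : Measure[m0] Ω} [Fintype ι]
  {w : Ω → ι → ℝ}

theorem condExp_dotProduct {m : MeasurableSpace Ω} (hw : ∀ i, Integrable (fun ω => w ω i) μ)
    (u : ι → ℝ) :
    μ[fun ω => u ⬝ᵥ w ω | m] =ᵐ[μ] fun ω => u ⬝ᵥ fun i => μ[fun ω' => w ω' i | m] ω := by
  have hsum : (fun ω => u ⬝ᵥ w ω) = ∑ i, u i • fun ω => w ω i := by
    funext ω; simp [dotProduct]
  have hsmul : ∀ᵐ ω ∂μ, ∀ i,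
      μ[u i • fun ω' => w ω' i | m] ω = u i * μ[fun ω' => w ω' i | m] ω :=
    ae_all_iff.2 fun i => condExp_smul (u i) (fun ω => w ω i) m
  rw [hsum]
  filter_upwards [condExp_finsetSum (s := Finset.univ) (fun i _ => (hw i).smul (u i)) m,
    hsmul] with ω hω_sum hω_smul
  simp only [hω_sum, Finset.sum_apply, hω_smul, dotProduct]

theorem condExp_dotProduct_add_of_indepFun [IsFiniteMeasure μ] {β : Type*} [MeasurableSpace β]
    {g : Ω → β} (hg : Measurable g) (hw : ∀ i, Integrable (fun ω => w ω i) μ) {ε : Ω → ℝ}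
    (hεm : Measurable ε) (hε : Integrable ε μ) (hε0 : ∫ ω, ε ω ∂μ = 0) (hind : IndepFun ε g μ)
    (u : ι → ℝ) :
    μ[fun ω => u ⬝ᵥ w ω + ε ω | MeasurableSpace.comap g inferInstance] =ᵐ[μ]
      fun ω => u ⬝ᵥ fun i => μ[fun ω' => w ω' i | MeasurableSpace.comap g inferInstance] ω := by
  have hεcond : μ[ε | MeasurableSpace.comap g inferInstance] =ᵐ[μ] fun _ => 0 := by
    simpa only [hε0] using condExp_indep_eq hεm.comap_le hg.comap_le
      (comap_measurable ε).stronglyMeasurable ((IndepFun_iff_Indep ε g μ).mp hind)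
  filter_upwards [condExp_add (Integrable.dotProduct hw u) hε _,
    condExp_dotProduct (m := MeasurableSpace.comap g inferInstance) hw u, hεcond]
    with ω hadd hdot hzero
  change μ[(fun ω => u ⬝ᵥ w ω) + ε | _] ω = _
  rw [hadd, Pi.add_apply, hzero, add_zero, hdot]

end CondExp

theorem measure_lt_abs_le_of_ae_abs_le_mul {Ω : Type*} [MeasurableSpace Ω] {μ : Measure Ω}
    {f g : Ω → ℝ} {a : ℝ} (ha : 0 < a) (h : ∀ᵐ ω ∂μ, |f ω| ≤ a * g ω) (t : ℝ) :
    μ {ω | t < |f ω|} ≤ μ {ω | t / a < g ω} := by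
  refine measure_mono_ae ?_
  filter_upwards [h] with ω hω (ht : t < |f ω|)
  change t / a < g ω
  rw [div_lt_iff₀' ha]
  exact ht.trans_le hω

theorem stmt_7_general
    {Ω : Type*} [MeasureSpace Ω] [IsProbabilityMeasure (ℙ : Measure Ω)]
    {d p : ℕ}
    (z : Ω → Fin d → ℝ) (hzm : Measurable z)
    (hz2 : ∀ i, MemLp (fun ω => z ω i) 2 ℙ)
    (μv : Fin d → ℝ)
    (ε : Ω → ℝ) (hεm : Measurable ε) (hε2 : MemLp ε 2 ℙ)
    (hεmean : ∫ ω, ε ω = 0)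
    (hindep : IndepFun z ε)
    (ϑ : ℝ) (θ : Fin d → ℝ)
    (y : Ω → ℝ) (hy : ∀ ω, y ω = ϑ + θ ⬝ᵥ z ω + ε ω)
    (M : Matrix (Fin d) (Fin p) ℝ) (hM : M.rank = p)
    (x : Ω → Fin p → ℝ) (hx : ∀ ω, x ω = Mᵀ *ᵥ z ω)
    -- the surrogate parameters (α, β): the minimizers of E[(y − a − b'x)²]
    (α : ℝ) (β : Fin p → ℝ)
    (hmin : ∀ (a : ℝ) (b : Fin p → ℝ),
        ∫ ω, (y ω - α - β ⬝ᵥ x ω) ^ 2 ≤ ∫ ω, (y ω - a - b ⬝ᵥ x ω) ^ 2)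
    (e : Ω → ℝ) (he : ∀ ω, e ω = y ω - α - β ⬝ᵥ x ω)
    -- the representation z = μ + Σ^{1/2} R z̃ with Σ^{1/2} the symmetric positive
    -- definite square root of Σ, R orthogonal, E[z̃] = 0 and E[z̃ z̃'] = I_d
    (S : Matrix (Fin d) (Fin d) ℝ) (hSpd : S.PosDef)
    (R : Matrix (Fin d) (Fin d) ℝ) (hR : Rᵀ * R = 1)
    (zt : Ω → Fin d → ℝ)
    (hzt2 : ∀ i, MemLp (fun ω => zt ω i) 2 ℙ)
    (hztmean : ∀ i, ∫ ω, zt ω i = 0)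
    (hztcov : ∀ i j, ∫ ω, zt ω i * zt ω j = (1 : Matrix (Fin d) (Fin d) ℝ) i j)
    (hzrep : ∀ ω, z ω = μv + S *ᵥ (R *ᵥ zt ω))
    -- θ̃ = R'Σ^{1/2}θ, M̃ = R'Σ^{1/2}M and the projection P = M̃(M̃'M̃)⁻¹M̃'
    (θt : Fin d → ℝ) (hθt : θt = Rᵀ *ᵥ (S *ᵥ θ))
    (Mt : Matrix (Fin d) (Fin p) ℝ) (hMt : Mt = Rᵀ * S * M)
    (P : Matrix (Fin d) (Fin d) ℝ) (hP : P = Mt * (Mtᵀ * Mt)⁻¹ * Mtᵀ)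
    -- the σ-algebra generated by x
    (mx : MeasurableSpace Ω) (hmx : mx = MeasurableSpace.comap x inferInstance)
    :
    (∀ᵐ ω ∂ℙ, |(ℙ[e|mx]) ω| ≤
        Real.sqrt (((1 - P) *ᵥ θt) ⬝ᵥ ((1 - P) *ᵥ θt)) *
          Real.sqrt ((fun i => (ℙ[fun ω' => zt ω' i|mx]) ω - (P *ᵥ zt ω) i) ⬝ᵥ
            (fun i => (ℙ[fun ω' => zt ω' i|mx]) ω - (P *ᵥ zt ω) i))) ∧
    (∀ t : ℝ, 0 < t → (1 - P) *ᵥ θt ≠ 0 →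
      ℙ {ω | t < |(ℙ[e|mx]) ω|} ≤
        ℙ {ω | t / Real.sqrt (((1 - P) *ᵥ θt) ⬝ᵥ ((1 - P) *ᵥ θt)) <
            Real.sqrt ((fun i => (ℙ[fun ω' => zt ω' i|mx]) ω - (P *ᵥ zt ω) i) ⬝ᵥ
              (fun i => (ℙ[fun ω' => zt ω' i|mx]) ω - (P *ᵥ zt ω) i))}) := by
  -- otherwise `mx`, a local instance, would replace the ambient σ-algebra in every integral
  subst hmx
  have hSinv : S⁻¹ * S = 1 := nonsing_inv_mul S hSpd.det_pos.ne'.isUnit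
  have hz (a : Fin d → ℝ) (ω : Ω) : a ⬝ᵥ z ω = a ⬝ᵥ μv + ((Rᵀ * S) *ᵥ a) ⬝ᵥ zt ω := by
    rw [hzrep, dotProduct_add, mulVec_mulVec, dotProduct_mulVec, ← mulVec_transpose,
      transpose_mul, show Sᵀ = S from hSpd.isHermitian]
  have hxz (b : Fin p → ℝ) (ω : Ω) : b ⬝ᵥ x ω = (M *ᵥ b) ⬝ᵥ μv + (Mt *ᵥ b) ⬝ᵥ zt ω := by
    rw [hx, dotProduct_mulVec, ← mulVec_transpose, transpose_transpose, hz, mulVec_mulVec, hMt]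
  set u := θt - Mt *ᵥ β with hu_def
  have he' (ω : Ω) : e ω = (ϑ + θ ⬝ᵥ μv - α - (M *ᵥ β) ⬝ᵥ μv) + u ⬝ᵥ zt ω + ε ω := by
    rw [he, hy, hz, hxz, hu_def, hθt, mulVec_mulVec, sub_dotProduct]
    ring
  have hzt_indep : IndepFun zt ε := hindep.of_eq_add_mulVec (A := S * R) (L := Rᵀ * S⁻¹)
    (by rw [Matrix.mul_assoc, ← Matrix.mul_assoc S⁻¹, hSinv, Matrix.one_mul, hR])
    fun ω => by rw [hzrep, mulVec_mulVec]
  have hnormal := integral_residual_mul_eq_zero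
    (by rw [funext hy]; exact ((memLp_const ϑ).add (MemLp.dotProduct hz2 θ)).add hε2)
    (fun i => by simp_rw [hx]; exact MemLp.dotProduct hz2 (Mᵀ i)) hmin
  simp_rw [← he] at hnormal
  obtain ⟨hc, hu⟩ := const_eq_zero_and_transpose_mulVec_eq_zero_of_integral_mul_eq_zero he'
    hzt2 hztmean hztcov hε2 hεmean hzt_indep Mt (by simpa using hnormal 1 0)
    fun b => by simpa [hxz] using hnormal (-((M *ᵥ b) ⬝ᵥ μv)) b
  have hθu : (1 - P) *ᵥ θt = u := by
    have hdet : IsUnit (Rᵀ * S).det := by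
      rw [det_mul]
      exact (isUnit_det_of_right_inverse hR).mul hSpd.det_pos.ne'.isUnit
    have hinj : Function.Injective Mt.mulVec := mulVec_injective_of_rank_eq <| by
      rw [hMt, rank_mul_eq_right_of_isUnit_det _ _ hdet, hM, Fintype.card_fin]
    rw [hP, show θt = u + Mt *ᵥ β from (sub_add_cancel θt _).symm, one_sub_proj_mulVec hinj hu]
  have hx_comp : x = (Mᵀ *ᵥ ·) ∘ z := funext hx
  have hcond := condExp_dotProduct_add_of_indepFun (μ := ℙ) (g := x)
    (by rw [hx_comp]; fun_prop) (fun i => (hzt2 i).integrable one_le_two) hεm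
    (hε2.integrable one_le_two) hεmean
    (by rw [hx_comp]; exact hindep.symm.comp measurable_id (by fun_prop)) u
  rw [show (fun ω => u ⬝ᵥ zt ω + ε ω) = e from funext fun ω => by rw [he', hc, zero_add]] at hcond
  refine ⟨?bound, fun t _ hne => measure_lt_abs_le_of_ae_abs_le_mul ?_ ?bound t⟩
  · filter_upwards [hcond] with ω hω
    rw [hω, hθu, ← sub_zero (u ⬝ᵥ _), ← dotProduct_proj_mulVec_eq_zero hu (zt ω), ← hP,
      ← dotProduct_sub]
    exact abs_dotProduct_le_sqrt_mul_sqrt _ _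
  · rw [hθu] at hne ⊢
    exact Real.sqrt_pos.2 (dotProduct_star_self_pos_iff.2 hne)

/-- Almost surely,
`|E[e | x]| ≤ ‖(I_d − P_{M̃})θ̃‖ · ‖E[z̃ | x] − P_{M̃} z̃‖` (Euclidean norms);
consequently, for every `t > 0`,
`P(|E[e|x]| > t) ≤ P(‖E[z̃|x] − P_{M̃} z̃‖ > t/‖(I_d − P_{M̃})θ̃‖)`
whenever `(I_d − P_{M̃})θ̃ ≠ 0`. -/
theorem stmt_7
    {Ω : Type*} [MeasureSpace Ω] [IsProbabilityMeasure (ℙ : Measure Ω)]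
    {d p : ℕ} (hpd : p < d)
    (z : Ω → Fin d → ℝ) (hzm : Measurable z)
    (hz2 : ∀ i, MemLp (fun ω => z ω i) 2 ℙ)
    (μv : Fin d → ℝ) (hμ : ∀ i, ∫ ω, z ω i = μv i)
    (Sg : Matrix (Fin d) (Fin d) ℝ) (hSgpd : Sg.PosDef)
    (hSg : ∀ i j, ∫ ω, (z ω i - μv i) * (z ω j - μv j) = Sg i j)
    (ε : Ω → ℝ) (hεm : Measurable ε) (hε2 : MemLp ε 2 ℙ)
    (hεmean : ∫ ω, ε ω = 0)
    (σ2 : ℝ) (hσ2 : 0 < σ2) (hεvar : ∫ ω, (ε ω) ^ 2 = σ2)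
    (hindep : IndepFun z ε)
    (ϑ : ℝ) (θ : Fin d → ℝ)
    (y : Ω → ℝ) (hy : ∀ ω, y ω = ϑ + θ ⬝ᵥ z ω + ε ω)
    (M : Matrix (Fin d) (Fin p) ℝ) (hM : M.rank = p)
    (x : Ω → Fin p → ℝ) (hx : ∀ ω, x ω = Mᵀ *ᵥ z ω)
    -- the surrogate parameters (α, β): the minimizers of E[(y − a − b'x)²]
    (α : ℝ) (β : Fin p → ℝ)
    (hmin : ∀ (a : ℝ) (b : Fin p → ℝ),
        ∫ ω, (y ω - α - β ⬝ᵥ x ω) ^ 2 ≤ ∫ ω, (y ω - a - b ⬝ᵥ x ω) ^ 2)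
    (e : Ω → ℝ) (he : ∀ ω, e ω = y ω - α - β ⬝ᵥ x ω)
    (s2 : ℝ) (hs2 : s2 = ∫ ω, (e ω) ^ 2)
    -- the representation z = μ + Σ^{1/2} R z̃ with Σ^{1/2} the symmetric positive
    -- definite square root of Σ, R orthogonal, E[z̃] = 0 and E[z̃ z̃'] = I_d
    (S : Matrix (Fin d) (Fin d) ℝ) (hSpd : S.PosDef) (hSsq : S * S = Sg)
    (R : Matrix (Fin d) (Fin d) ℝ) (hR : Rᵀ * R = 1)
    (zt : Ω → Fin d → ℝ) (hztm : Measurable zt)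
    (hzt2 : ∀ i, MemLp (fun ω => zt ω i) 2 ℙ)
    (hztmean : ∀ i, ∫ ω, zt ω i = 0)
    (hztcov : ∀ i j, ∫ ω, zt ω i * zt ω j = (1 : Matrix (Fin d) (Fin d) ℝ) i j)
    (hzrep : ∀ ω, z ω = μv + S *ᵥ (R *ᵥ zt ω))
    -- θ̃ = R'Σ^{1/2}θ, M̃ = R'Σ^{1/2}M and the projection P = M̃(M̃'M̃)⁻¹M̃'
    (θt : Fin d → ℝ) (hθt : θt = Rᵀ *ᵥ (S *ᵥ θ))
    (Mt : Matrix (Fin d) (Fin p) ℝ) (hMt : Mt = Rᵀ * S * M)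
    (P : Matrix (Fin d) (Fin d) ℝ) (hP : P = Mt * (Mtᵀ * Mt)⁻¹ * Mtᵀ)
    -- the σ-algebra generated by x
    (mx : MeasurableSpace Ω) (hmx : mx = MeasurableSpace.comap x inferInstance)
    :
    (∀ᵐ ω ∂ℙ, |(ℙ[e|mx]) ω| ≤
        Real.sqrt (((1 - P) *ᵥ θt) ⬝ᵥ ((1 - P) *ᵥ θt)) *
          Real.sqrt ((fun i => (ℙ[fun ω' => zt ω' i|mx]) ω - (P *ᵥ zt ω) i) ⬝ᵥ
            (fun i => (ℙ[fun ω' => zt ω' i|mx]) ω - (P *ᵥ zt ω) i))) ∧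
    (∀ t : ℝ, 0 < t → (1 - P) *ᵥ θt ≠ 0 →
      ℙ {ω | t < |(ℙ[e|mx]) ω|} ≤
        ℙ {ω | t / Real.sqrt (((1 - P) *ᵥ θt) ⬝ᵥ ((1 - P) *ᵥ θt)) <
            Real.sqrt ((fun i => (ℙ[fun ω' => zt ω' i|mx]) ω - (P *ᵥ zt ω) i) ⬝ᵥ
              (fun i => (ℙ[fun ω' => zt ω' i|mx]) ω - (P *ᵥ zt ω) i))}) :=
  stmt_7_general z hzm hz2 μv ε hεm hε2 hεmean hindep ϑ θ y hy M hM x hx α β hmin e he S hSpd R hR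
    zt hzt2 hztmean hztcov hzrep θt hθt Mt hMt P hP mx hmx
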